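/- Let α ∈ [1/2, 1) and B > 1. There is a constant C such that for all j, the four-fold sum Σ_{n₁,n₂,n₃,n₄ ∈ ℤ, |n_i| ∈ [B^{j-1},B^{j+1}]} (|n₁−n₂+n₃−n₄|+1)^{−α} (|n₃−n₄|+1)^{−α} (|n₁−n₂|+1)^{−α} ≤ C B^{2j(2−α)}. -/

import Mathlib

/-!
Since `|n₁ - n₂ + n₃ - n₄| + 1 ≥ 1`, the first factor can be dropped, and the remaining sum is at
most the square of `∑_{|a|, |b| ≤ R} (|a - b| + 1)^(-α)` with `R = B^(j+1)`. For fixed `a`, the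
values `|a - b|` hit each `k ≤ 2R` at most twice, and `∑_{k < n} (k + 1)^(-α) ≤ n^(1-α)/(1-α)`
telescopes by concavity of `t ↦ t^(1-α)`; so the double sum is `O(R^(2-α)) = O(B^(j(2-α)))`.
-/

open Finset

lemma mul_rpow_neg_le_rpow_sub_rpow_sub_one {α x : ℝ} (hα₀ : 0 ≤ α) (hα₁ : α ≤ 1) (hx : 1 ≤ x) :
    (1 - α) * x ^ (-α) ≤ x ^ (1 - α) - (x - 1) ^ (1 - α) := by
  have hx0 : 0 < x := by linarith
  have hbern := rpow_one_add_le_one_add_mul_self (s := -x⁻¹)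
    (neg_le_neg (inv_le_one_of_one_le₀ hx)) (sub_nonneg.2 hα₁) (by linarith)
  have hfactor : (x - 1) ^ (1 - α) = x ^ (1 - α) * (1 + -x⁻¹) ^ (1 - α) := by
    rw [← Real.mul_rpow hx0.le (by linarith [inv_le_one_of_one_le₀ hx])]
    congr 1
    field_simp
    ring
  have hinv : x ^ (1 - α) * x⁻¹ = x ^ (-α) := by
    rw [← Real.rpow_neg_one, ← Real.rpow_add hx0]
    ring_nf
  rw [hfactor, ← hinv]
  nlinarith [Real.rpow_nonneg hx0.le (1 - α)]

lemma sum_range_add_one_rpow_neg_le {α : ℝ} (hα₀ : 0 ≤ α) (hα₁ : α < 1) (N : ℕ) :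
    ∑ k ∈ range N, ((k : ℝ) + 1) ^ (-α) ≤ (N : ℝ) ^ (1 - α) / (1 - α) := by
  rw [le_div_iff₀ (sub_pos.2 hα₁), sum_mul]
  calc ∑ k ∈ range N, ((k : ℝ) + 1) ^ (-α) * (1 - α)
      ≤ ∑ k ∈ range N, (((k + 1 : ℕ) : ℝ) ^ (1 - α) - (k : ℝ) ^ (1 - α)) := by
        gcongr with k
        have := mul_rpow_neg_le_rpow_sub_rpow_sub_one hα₀ hα₁.le
          (le_add_of_nonneg_left (Nat.cast_nonneg (α := ℝ) k))
        push_cast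
        rwa [add_sub_cancel_right, mul_comm] at this
    _ = (N : ℝ) ^ (1 - α) := by
        rw [sum_range_sub (fun k : ℕ => (k : ℝ) ^ (1 - α))]
        simp [Real.zero_rpow (sub_pos.2 hα₁).ne']

lemma sum_Icc_comp_natAbs_le {φ : ℕ → ℝ} (hφ : ∀ n, 0 ≤ φ n) (L : ℕ) :
    ∑ k ∈ Icc (-(L : ℤ)) L, φ k.natAbs ≤ 2 * ∑ n ∈ range (L + 1), φ n := by
  rw [← sum_fiberwise_of_maps_to (g := Int.natAbs) (t := range (L + 1))
    (fun k hk => by simp only [mem_Icc, mem_range] at hk ⊢; omega), mul_sum]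
  gcongr with n
  rw [sum_congr rfl fun k hk => by rw [(mem_filter.1 hk).2], sum_const, nsmul_eq_mul]
  refine mul_le_mul_of_nonneg_right ?_ (hφ n)
  have hfiber : ((Icc (-(L : ℤ)) L).filter (·.natAbs = n)).card ≤ 2 :=
    (card_le_card fun k hk => by simp only [mem_filter, mem_insert, mem_singleton] at hk ⊢; omega).trans
      (card_le_two (a := (n : ℤ)) (b := -n))
  exact_mod_cast hfiber

lemma sum_Icc_abs_sub_add_one_rpow_neg_le {α : ℝ} (hα₀ : 0 ≤ α) (hα₁ : α < 1) {N : ℕ} {a : ℤ}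
    (ha : a ∈ Icc (-(N : ℤ)) N) :
    ∑ b ∈ Icc (-(N : ℤ)) N, (|(a : ℝ) - b| + 1) ^ (-α)
      ≤ 2 * (2 * N + 1 : ℝ) ^ (1 - α) / (1 - α) := by
  have hφ : ∀ n : ℕ, 0 ≤ ((n : ℝ) + 1) ^ (-α) := fun n => by positivity
  calc ∑ b ∈ Icc (-(N : ℤ)) N, (|(a : ℝ) - b| + 1) ^ (-α)
      = ∑ k ∈ (Icc (-(N : ℤ)) N).image (a - ·), ((k.natAbs : ℝ) + 1) ^ (-α) := by
        rw [sum_image fun _ _ _ _ h => sub_right_injective h]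
        simp [Nat.cast_natAbs]
    _ ≤ ∑ k ∈ Icc (-((2 * N : ℕ) : ℤ)) (2 * N : ℕ), ((k.natAbs : ℝ) + 1) ^ (-α) := by
        refine sum_le_sum_of_subset_of_nonneg ?_ fun k _ _ => hφ _
        intro k hk
        obtain ⟨b, hb, rfl⟩ := mem_image.1 hk
        simp only [mem_Icc] at ha hb ⊢
        omega
    _ ≤ 2 * ∑ n ∈ range (2 * N + 1), ((n : ℝ) + 1) ^ (-α) := sum_Icc_comp_natAbs_le hφ _
    _ ≤ 2 * (2 * N + 1 : ℝ) ^ (1 - α) / (1 - α) := by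
        rw [mul_div_assoc]
        gcongr
        exact_mod_cast sum_range_add_one_rpow_neg_le hα₀ hα₁ (2 * N + 1)

lemma sum_sum_abs_sub_add_one_rpow_neg_le {α : ℝ} (hα₀ : 0 ≤ α) (hα₁ : α < 1) (N : ℕ) :
    ∑ a ∈ Icc (-(N : ℤ)) N, ∑ b ∈ Icc (-(N : ℤ)) N, (|(a : ℝ) - b| + 1) ^ (-α)
      ≤ 2 * (2 * N + 1 : ℝ) ^ (2 - α) / (1 - α) := by
  calc ∑ a ∈ Icc (-(N : ℤ)) N, ∑ b ∈ Icc (-(N : ℤ)) N, (|(a : ℝ) - b| + 1) ^ (-α)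
      ≤ ∑ _a ∈ Icc (-(N : ℤ)) N, 2 * (2 * N + 1 : ℝ) ^ (1 - α) / (1 - α) :=
        sum_le_sum fun a ha => sum_Icc_abs_sub_add_one_rpow_neg_le hα₀ hα₁ ha
    _ = (2 * N + 1 : ℝ) * (2 * (2 * N + 1 : ℝ) ^ (1 - α) / (1 - α)) := by
        rw [sum_const, Int.card_Icc, nsmul_eq_mul]
        congr 1
        rw [show (N : ℤ) + 1 - -N = ((2 * N + 1 : ℕ) : ℤ) by push_cast; ring, Int.toNat_natCast]
        push_cast; ring
    _ = 2 * (2 * N + 1 : ℝ) ^ (2 - α) / (1 - α) := by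
        rw [show (2 : ℝ) - α = 1 - α + 1 by ring, Real.rpow_add_one (by positivity)]
        ring

lemma tsum_tsum_tsum_tsum_eq_sum {β M : Type*} [AddCommMonoid M] [TopologicalSpace M]
    {f : β → β → β → β → M} {s : Finset β}
    (hf : ∀ a b c d, f a b c d ≠ 0 → a ∈ s ∧ b ∈ s ∧ c ∈ s ∧ d ∈ s) :
    ∑' a, ∑' b, ∑' c, ∑' d, f a b c d = ∑ a ∈ s, ∑ b ∈ s, ∑ c ∈ s, ∑ d ∈ s, f a b c d := by
  have h₄ : ∀ a b c, ∑' d, f a b c d = ∑ d ∈ s, f a b c d := fun a b c =>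
    tsum_eq_sum fun d hd => by_contra fun h => hd (hf a b c d h).2.2.2
  have h₃ : ∀ a b, ∑' c, ∑ d ∈ s, f a b c d = ∑ c ∈ s, ∑ d ∈ s, f a b c d := fun a b =>
    tsum_eq_sum fun c hc => sum_eq_zero fun d _ => by_contra fun h => hc (hf a b c d h).2.2.1
  have h₂ : ∀ a, ∑' b, ∑ c ∈ s, ∑ d ∈ s, f a b c d = ∑ b ∈ s, ∑ c ∈ s, ∑ d ∈ s, f a b c d :=
    fun a => tsum_eq_sum fun b hb => sum_eq_zero fun c _ => sum_eq_zero fun d _ =>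
      by_contra fun h => hb (hf a b c d h).2.1
  have h₁ : ∑' a, ∑ b ∈ s, ∑ c ∈ s, ∑ d ∈ s, f a b c d
      = ∑ a ∈ s, ∑ b ∈ s, ∑ c ∈ s, ∑ d ∈ s, f a b c d :=
    tsum_eq_sum fun a ha => sum_eq_zero fun b _ => sum_eq_zero fun c _ => sum_eq_zero fun d _ =>
      by_contra fun h => ha (hf a b c d h).1
  simp only [h₄, h₃, h₂, h₁]

lemma mem_Icc_natFloor_of_abs_le {n : ℤ} {R : ℝ} (h : |(n : ℝ)| ≤ R) :
    n ∈ Icc (-(⌊R⌋₊ : ℤ)) ⌊R⌋₊ := by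
  have : n.natAbs ≤ ⌊R⌋₊ := Nat.le_floor (by rwa [Nat.cast_natAbs, Int.cast_abs])
  rw [mem_Icc]
  omega

lemma tsum_ite_rpow_neg_le {α R : ℝ} (hα₀ : 0 ≤ α) (hα₁ : α < 1) (hR : 1 ≤ R)
    (p : ℤ → ℤ → ℤ → ℤ → Prop) [∀ a b c d, Decidable (p a b c d)]
    (hp : ∀ a b c d, p a b c d → |(a : ℝ)| ≤ R ∧ |(b : ℝ)| ≤ R ∧ |(c : ℝ)| ≤ R ∧ |(d : ℝ)| ≤ R) :
    ∑' a : ℤ, ∑' b : ℤ, ∑' c : ℤ, ∑' d : ℤ,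
      (if p a b c d then (|(a : ℝ) - b + c - d| + 1) ^ (-α) * (|(c : ℝ) - d| + 1) ^ (-α) *
        (|(a : ℝ) - b| + 1) ^ (-α) else 0)
      ≤ (2 * (3 * R) ^ (2 - α) / (1 - α)) ^ 2 := by
  set s := Icc (-(⌊R⌋₊ : ℤ)) ⌊R⌋₊
  set g : ℤ → ℤ → ℝ := fun a b => (|(a : ℝ) - b| + 1) ^ (-α)
  rw [tsum_tsum_tsum_tsum_eq_sum (s := s) fun a b c d h => by
    split_ifs at h with hpabcd
    · obtain ⟨ha, hb, hc, hd⟩ := hp a b c d hpabcd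
      exact ⟨mem_Icc_natFloor_of_abs_le ha, mem_Icc_natFloor_of_abs_le hb,
        mem_Icc_natFloor_of_abs_le hc, mem_Icc_natFloor_of_abs_le hd⟩
    · exact absurd rfl h]
  calc _ ≤ ∑ a ∈ s, ∑ b ∈ s, ∑ c ∈ s, ∑ d ∈ s, g c d * g a b := by
        gcongr with a _ b _ c _ d _
        split_ifs
        · rw [mul_assoc]
          exact mul_le_of_le_one_left (by positivity) (Real.rpow_le_one_of_one_le_of_nonpos
            (by linarith [abs_nonneg ((a : ℝ) - b + c - d)]) (by linarith))
        · positivity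
    _ = (∑ a ∈ s, ∑ b ∈ s, g a b) ^ 2 := by simp only [sq, sum_mul, mul_sum]
    _ ≤ (2 * (2 * ⌊R⌋₊ + 1 : ℝ) ^ (2 - α) / (1 - α)) ^ 2 := by
        gcongr
        exact sum_sum_abs_sub_add_one_rpow_neg_le hα₀ hα₁ _
    _ ≤ (2 * (3 * R) ^ (2 - α) / (1 - α)) ^ 2 := by
        have := sub_pos.2 hα₁
        have hN : (2 * ⌊R⌋₊ + 1 : ℝ) ≤ 3 * R := by linarith [Nat.floor_le (zero_le_one.trans hR)]
        gcongr
        linarith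

/-- for `α ∈ [1/2,1)` and `B > 1`, the four-fold sum over the annulus
`|nᵢ| ∈ [B^{j-1}, B^{j+1}]` of
`(|n₁−n₂+n₃−n₄|+1)^{−α}(|n₃−n₄|+1)^{−α}(|n₁−n₂|+1)^{−α}` is `O(B^{2j(2−α)})`. -/
theorem stmt_16 (α B : ℝ) (hα₁ : 1 / 2 ≤ α) (hα₂ : α < 1) (hB : 1 < B) :
    ∃ C : ℝ, 0 < C ∧ ∀ j : ℕ, 1 ≤ j →
      (∑' n₁ : ℤ, ∑' n₂ : ℤ, ∑' n₃ : ℤ, ∑' n₄ : ℤ,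
        (if (B ^ ((j : ℝ) - 1) ≤ |(n₁ : ℝ)| ∧ |(n₁ : ℝ)| ≤ B ^ ((j : ℝ) + 1) ∧
             B ^ ((j : ℝ) - 1) ≤ |(n₂ : ℝ)| ∧ |(n₂ : ℝ)| ≤ B ^ ((j : ℝ) + 1) ∧
             B ^ ((j : ℝ) - 1) ≤ |(n₃ : ℝ)| ∧ |(n₃ : ℝ)| ≤ B ^ ((j : ℝ) + 1) ∧
             B ^ ((j : ℝ) - 1) ≤ |(n₄ : ℝ)| ∧ |(n₄ : ℝ)| ≤ B ^ ((j : ℝ) + 1))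
         then (|(n₁ : ℝ) - (n₂ : ℝ) + (n₃ : ℝ) - (n₄ : ℝ)| + 1) ^ (-α) *
              (|(n₃ : ℝ) - (n₄ : ℝ)| + 1) ^ (-α) * (|(n₁ : ℝ) - (n₂ : ℝ)| + 1) ^ (-α)
         else 0))
      ≤ C * B ^ (2 * (j : ℝ) * (2 - α)) := by
  have hB₀ : 0 < B := by linarith
  refine ⟨(2 * (3 * B) ^ (2 - α) / (1 - α)) ^ 2, by have := sub_pos.2 hα₂; positivity,
    fun j _ => ?_⟩
  have hscale :
      (3 * B ^ ((j : ℝ) + 1)) ^ (2 - α) = (3 * B) ^ (2 - α) * B ^ ((j : ℝ) * (2 - α)) := by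
    rw [Real.mul_rpow (by norm_num) (by positivity), Real.mul_rpow (by norm_num) hB₀.le,
      ← Real.rpow_mul hB₀.le, add_mul, one_mul, Real.rpow_add hB₀]
    ring
  calc _ ≤ (2 * (3 * B ^ ((j : ℝ) + 1)) ^ (2 - α) / (1 - α)) ^ 2 :=
        tsum_ite_rpow_neg_le (by linarith) hα₂ (Real.one_le_rpow hB.le (by positivity)) _
          fun _ _ _ _ h => ⟨h.2.1, h.2.2.2.1, h.2.2.2.2.2.1, h.2.2.2.2.2.2.2⟩
    _ = (2 * (3 * B) ^ (2 - α) / (1 - α)) ^ 2 * B ^ (2 * (j : ℝ) * (2 - α)) := by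
        rw [hscale, show 2 * (j : ℝ) * (2 - α) = (j : ℝ) * (2 - α) * 2 by ring,
          Real.rpow_mul hB₀.le _ 2, Real.rpow_two]
        ring
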